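/- arXiv:2605.09010 — 4 statements merged into one kernel-verified Lean document; each statement's English description precedes it below -/
import Mathlib

section
/- Let u, v, w be ultrafilters on ℕ. If v strongly divides u and w = t·u for some ultrafilter t (u left-divides w in (βℕ,·)), then v strongly divides w. -/
/- `A ∈ t * u` means that `a * b ∈ A` for `t`-almost all `a` and `u`-almost all `b`, so a set that
absorbs multiplication on the left and lies in `u` lies in every `t * u`. Each `xℕ` absorbs
multiplication, hence `D(u) ⊆ D(t * u)`, and `D(u) ∈ v` gives `D(t * u) ∈ v`. -/

/-- x·A = {x*a : a ∈ A} in ℕ+. -/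
def pmul (x : ℕ+) (A : Set ℕ+) : Set ℕ+ := (x * ·) '' A

/-- xℕ, the set of positive multiples of x. -/
def mulsOf (x : ℕ+) : Set ℕ+ := {n | x ∣ n}

/-- D(u) = {x : xℕ ∈ u}. -/
def Dset (u : Ultrafilter ℕ+) : Set ℕ+ := {x | mulsOf x ∈ u}

/-- v strongly divides u: D(u) ∈ v. -/
def SDvd (v u : Ultrafilter ℕ+) : Prop := Dset u ∈ v

/-- Membership in the quotient u/v:  A ∈ u/v iff {x : x·A ∈ u} ∈ v. -/
def quotMem (u v : Ultrafilter ℕ+) (A : Set ℕ+) : Prop := {x | pmul x A ∈ u} ∈ v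

attribute [local instance] Ultrafilter.mul

theorem Ultrafilter.mem_mul_of_mem_of_mul_left_mem {M : Type*} [Mul M] {A : Set M}
    (hA : ∀ a b, b ∈ A → a * b ∈ A) (t : Ultrafilter M) {u : Ultrafilter M} (hu : A ∈ u) :
    A ∈ t * u :=
  (Ultrafilter.eventually_mul t u (· ∈ A)).mpr <|
    Filter.Eventually.of_forall fun a => Filter.mem_of_superset hu fun b hb => hA a b hb

theorem mul_mem_mulsOf (x a : ℕ+) {b : ℕ+} (hb : b ∈ mulsOf x) : a * b ∈ mulsOf x :=
  Dvd.dvd.mul_left hb a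

theorem Dset_subset_Dset_mul (t u : Ultrafilter ℕ+) : Dset u ⊆ Dset (t * u) := fun x hx =>
  Ultrafilter.mem_mul_of_mem_of_mul_left_mem (fun a _ => mul_mem_mulsOf x a) t hx

theorem SDvd.mul_left {v u : Ultrafilter ℕ+} (h : SDvd v u) (t : Ultrafilter ℕ+) :
    SDvd v (t * u) :=
  Filter.mem_of_superset h (Dset_subset_Dset_mul t u)

theorem stmt2 (u v w t : Ultrafilter ℕ+) (h : SDvd v u) (hw : w = t * u) :
    SDvd v w :=
  hw ▸ h.mul_left t
end

section
/- Let u be a self-divisible ultrafilter on ℕ. Then D((u/u)·u) ⊆ D(u·u). -/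
attribute [local instance] Ultrafilter.mul

theorem Ultrafilter.mem_mul_iff {M : Type*} [Mul M] (v w : Ultrafilter M) (A : Set M) :
    A ∈ v * w ↔ {a | {b | a * b ∈ A} ∈ w} ∈ v :=
  Ultrafilter.eventually_mul v w (· ∈ A)

theorem mem_Dset_mul_iff (v w : Ultrafilter ℕ+) (x : ℕ+) :
    x ∈ Dset (v * w) ↔ {a | {b | x ∣ a * b} ∈ w} ∈ v :=
  Ultrafilter.mem_mul_iff v w (mulsOf x)

theorem mul_mem_setOf_dvd_mul (w : Ultrafilter ℕ+) (x y : ℕ+) {a : ℕ+}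
    (ha : a ∈ {a | {b | x ∣ a * b} ∈ w}) : y * a ∈ {a | {b | x ∣ a * b} ∈ w} :=
  Filter.mem_of_superset ha fun b (hb : x ∣ a * b) =>
    show x ∣ y * a * b by rw [mul_assoc]; exact hb.mul_left y

theorem pmul_subset_of_mul_mem {A : Set ℕ+} (hA : ∀ y a, a ∈ A → y * a ∈ A) (y : ℕ+) :
    pmul y A ⊆ A := by
  rintro _ ⟨a, ha, rfl⟩
  exact hA y a ha

theorem mem_of_quotMem_of_mul_mem {u v : Ultrafilter ℕ+} {A : Set ℕ+}
    (hA : ∀ y a, a ∈ A → y * a ∈ A) (h : quotMem u v A) : A ∈ u := by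
  obtain ⟨y, hy⟩ := Ultrafilter.nonempty_of_mem h
  exact Filter.mem_of_superset hy (pmul_subset_of_mul_mem hA y)

theorem stmt4_general (u : Ultrafilter ℕ+)
    (q : Ultrafilter ℕ+) (hq : ∀ A : Set ℕ+, A ∈ q ↔ quotMem u u A) :
    Dset (q * u) ⊆ Dset (u * u) := by
  intro x hx
  rw [mem_Dset_mul_iff] at hx ⊢
  exact mem_of_quotMem_of_mul_mem (fun y _ ha => mul_mem_setOf_dvd_mul u x y ha) ((hq _).1 hx)

theorem stmt4 (u : Ultrafilter ℕ+) (hu : Dset u ∈ u)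
    (q : Ultrafilter ℕ+) (hq : ∀ A : Set ℕ+, A ∈ q ↔ quotMem u u A) :
    Dset (q * u) ⊆ Dset (u * u) :=
  stmt4_general u q hq
end

section
/- Let u be a self-divisible multiplicative-idempotent ultrafilter on ℕ (u·u = u and D(u) ∈ u). Then D(u) = D((u/u)·u) = D(u·(u/u)). -/
attribute [local instance] Ultrafilter.mul

/-!
If `x ∈ D(v·w)` then `x ∣ k n` for `v`-many `k` and, for each such `k`, `w`-many `n`. As `x` has
finitely many divisors, `gcd(x, k)` is `v`-almost surely a constant `d`, which lies in `D(v)`, and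
likewise `gcd(x, n)` is `w`-almost surely some `e ∈ D(w)`; then `x ∣ gcd(x, k n) ∣ d e`.
Every element of `D(u/u)` divides an element of `D(u)`, so every `x ∈ D((u/u)·u) ∪ D(u·(u/u))`
divides a product of two elements of `D(u)`, which lies in `D(u·u) = D(u)`. Conversely
`1 ∈ D(u/u)` gives `D(u) ⊆ D((u/u)·u) ∩ D(u·(u/u))`.
-/

open Filter

lemma PNat.gcd_mul_dvd_mul_gcd (x k n : ℕ+) : x.gcd (k * n) ∣ x.gcd k * x.gcd n := by
  rw [PNat.dvd_iff, PNat.mul_coe, PNat.gcd_coe, PNat.mul_coe, PNat.gcd_coe, PNat.gcd_coe]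
  exact _root_.gcd_mul_dvd_mul_gcd (x : ℕ) k n

lemma pmul_mulsOf (k d : ℕ+) : pmul k (mulsOf d) = mulsOf (k * d) := by
  ext n
  constructor
  · rintro ⟨m, hm, rfl⟩
    exact mul_dvd_mul_left k hm
  · rintro ⟨t, rfl⟩
    exact ⟨d * t, dvd_mul_right d t, (mul_assoc k d t).symm⟩

lemma one_mem_Dset (u : Ultrafilter ℕ+) : 1 ∈ Dset u :=
  mem_of_superset univ_mem fun n _ => one_dvd n

lemma mem_Dset_of_dvd {u : Ultrafilter ℕ+} {x y : ℕ+} (hy : y ∈ Dset u) (hxy : x ∣ y) :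
    x ∈ Dset u :=
  mem_of_superset hy fun _ hn => hxy.trans hn

lemma mul_mem_Dset_mul {v w : Ultrafilter ℕ+} {d e : ℕ+} (hd : d ∈ Dset v)
    (he : e ∈ Dset w) : d * e ∈ Dset (v * w) :=
  (Ultrafilter.eventually_mul v w _).mpr <|
    mem_of_superset hd fun _ hk => mem_of_superset he fun _ hn => mul_dvd_mul hk hn

lemma exists_mem_Dset_eventually_gcd_eq (v : Ultrafilter ℕ+) (x : ℕ+) :
    ∃ d ∈ Dset v, ∀ᶠ k in v, x.gcd k = d := by
  have hfin : {d : ℕ+ | d ∣ x}.Finite :=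
    (Set.finite_Icc 1 x).subset fun d hd => ⟨one_le, PNat.le_of_dvd hd⟩
  obtain ⟨d, -, hd⟩ :=
    (Ultrafilter.eventually_exists_mem_iff (P := fun d k => x.gcd k = d) hfin).mp <|
      Eventually.of_forall fun k => ⟨x.gcd k, PNat.gcd_dvd_left x k, rfl⟩
  exact ⟨d, mem_of_superset hd fun k hk => hk ▸ PNat.gcd_dvd_right x k, hd⟩

lemma exists_dvd_mul_of_mem_Dset_mul {v w : Ultrafilter ℕ+} {x : ℕ+}
    (hx : x ∈ Dset (v * w)) : ∃ d ∈ Dset v, ∃ e ∈ Dset w, x ∣ d * e := by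
  obtain ⟨d, hd, hgcd_v⟩ := exists_mem_Dset_eventually_gcd_eq v x
  obtain ⟨e, he, hgcd_w⟩ := exists_mem_Dset_eventually_gcd_eq w x
  have hx' : ∀ᶠ k in v, ∀ᶠ n in w, x ∣ k * n := (Ultrafilter.eventually_mul v w _).mp hx
  obtain ⟨k, hk, rfl⟩ := (hx'.and hgcd_v).exists
  obtain ⟨n, hn, rfl⟩ := (hk.and hgcd_w).exists
  refine ⟨_, hd, _, he, ?_⟩
  calc x = x.gcd (k * n) := (PNat.gcd_eq_left_iff_dvd.mpr hn).symm
    _ ∣ x.gcd k * x.gcd n := PNat.gcd_mul_dvd_mul_gcd x k n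

lemma exists_dvd_mem_Dset_of_quotMem {u v q : Ultrafilter ℕ+}
    (hq : ∀ A, A ∈ q ↔ quotMem u v A) : ∀ d ∈ Dset q, ∃ y ∈ Dset u, d ∣ y := by
  intro d hd
  obtain ⟨j, hj⟩ := Ultrafilter.nonempty_of_mem ((hq _).mp hd)
  rw [Set.mem_ofPred_eq, pmul_mulsOf] at hj
  exact ⟨j * d, hj, dvd_mul_left d j⟩

lemma mem_Dset_of_mem_Dset_mul {u v w : Ultrafilter ℕ+} (hid : u * u = u)
    (hv : ∀ d ∈ Dset v, ∃ y ∈ Dset u, d ∣ y) (hw : ∀ e ∈ Dset w, ∃ z ∈ Dset u, e ∣ z)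
    {x : ℕ+} (hx : x ∈ Dset (v * w)) : x ∈ Dset u := by
  obtain ⟨d, hd, e, he, hxde⟩ := exists_dvd_mul_of_mem_Dset_mul hx
  obtain ⟨y, hy, hdy⟩ := hv d hd
  obtain ⟨z, hz, hez⟩ := hw e he
  have hyz : y * z ∈ Dset u := hid ▸ mul_mem_Dset_mul hy hz
  exact mem_Dset_of_dvd hyz (hxde.trans (mul_dvd_mul hdy hez))

theorem stmt5_general (u : Ultrafilter ℕ+) (hid : u * u = u)
    (q : Ultrafilter ℕ+) (hq : ∀ A : Set ℕ+, A ∈ q ↔ quotMem u u A) :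
    Dset u = Dset (q * u) ∧ Dset u = Dset (u * q) := by
  have hq_dvd := exists_dvd_mem_Dset_of_quotMem hq
  have hu_dvd : ∀ e ∈ Dset u, ∃ z ∈ Dset u, e ∣ z := fun e he => ⟨e, he, dvd_rfl⟩
  constructor
  · refine Set.Subset.antisymm (fun x hx => ?_) fun x hx =>
      mem_Dset_of_mem_Dset_mul hid hq_dvd hu_dvd hx
    simpa using mul_mem_Dset_mul (one_mem_Dset q) hx
  · refine Set.Subset.antisymm (fun x hx => ?_) fun x hx =>
      mem_Dset_of_mem_Dset_mul hid hu_dvd hq_dvd hx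
    simpa using mul_mem_Dset_mul hx (one_mem_Dset q)

theorem stmt5 (u : Ultrafilter ℕ+) (hu : Dset u ∈ u) (hid : u * u = u)
    (q : Ultrafilter ℕ+) (hq : ∀ A : Set ℕ+, A ∈ q ↔ quotMem u u A) :
    Dset u = Dset (q * u) ∧ Dset u = Dset (u * q) :=
  stmt5_general u hid q hq
end

section
/- Let f : ℕ → ℕ be a multiplicative homomorphism (f(ab) = f(a)f(b) for all a, b). Then for all ultrafilters u, v with v strongly dividing u, every member of the pushforward f̃(u/v) belongs to f̃(u)/f̃(v); hence f̃(u/v) = f̃(u)/f̃(v). -/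
attribute [local instance] Ultrafilter.mul

/-!
Multiplicativity gives `f(x · f⁻¹(A)) ⊆ f(x) · A`, hence `f̃(u/v) ⊆ f̃(u)/f̃(v)`. Since `x · A` and
`x · Aᶜ` are disjoint, `f̃(u)/f̃(v)` never contains both `A` and `Aᶜ`. On the other hand `v ∣ u`
makes `u/v` an ultrafilter: for `x ∈ D(u)`, the set `xℕ ∈ u` is the union of `x · A` and `x · Aᶜ`.
So if `A ∉ f̃(u/v)` then `Aᶜ ∈ f̃(u/v) ⊆ f̃(u)/f̃(v)`, and `A ∉ f̃(u)/f̃(v)`.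
-/

lemma pmul_union_pmul_compl (x : ℕ+) (A : Set ℕ+) : pmul x A ∪ pmul x Aᶜ = mulsOf x := by
  rw [pmul, pmul, ← Set.image_union, Set.union_compl_self, Set.image_univ]
  ext n
  exact ⟨fun ⟨a, ha⟩ => ⟨a, ha.symm⟩, fun ⟨a, ha⟩ => ⟨a, ha.symm⟩⟩

lemma disjoint_pmul_pmul_compl (x : ℕ+) (A : Set ℕ+) : Disjoint (pmul x A) (pmul x Aᶜ) :=
  (Set.disjoint_image_iff (mul_right_injective x)).2 disjoint_compl_right

lemma pmul_subset_preimage_pmul {f : ℕ+ → ℕ+} (hf : ∀ a b : ℕ+, f (a * b) = f a * f b)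
    (x : ℕ+) (A : Set ℕ+) : pmul x (f ⁻¹' A) ⊆ f ⁻¹' pmul (f x) A := by
  rintro _ ⟨a, ha, rfl⟩
  exact ⟨f a, ha, (hf x a).symm⟩

lemma quotMem_map_of_quotMem {f : ℕ+ → ℕ+} (hf : ∀ a b : ℕ+, f (a * b) = f a * f b)
    {u v : Ultrafilter ℕ+} {A : Set ℕ+} (h : quotMem u v (f ⁻¹' A)) :
    quotMem (u.map f) (v.map f) A := by
  refine Ultrafilter.mem_map.2 (Filter.mem_of_superset h fun x hx => ?_)
  exact Ultrafilter.mem_map.2 (Filter.mem_of_superset hx (pmul_subset_preimage_pmul hf x A))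

lemma not_quotMem_compl {u v : Ultrafilter ℕ+} {A : Set ℕ+} (h : quotMem u v A) :
    ¬ quotMem u v Aᶜ := fun hc => by
  obtain ⟨x, hxA, hxAc⟩ := Ultrafilter.nonempty_of_mem (Filter.inter_mem h hc)
  have hxAAc := Filter.inter_mem hxA hxAc
  rw [Set.disjoint_iff_inter_eq_empty.1 (disjoint_pmul_pmul_compl x A)] at hxAAc
  exact Ultrafilter.empty_notMem hxAAc

lemma quotMem_compl_of_not_quotMem {u v : Ultrafilter ℕ+} (huv : SDvd v u) {A : Set ℕ+}
    (h : ¬ quotMem u v A) : quotMem u v Aᶜ := by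
  refine Filter.mem_of_superset (Filter.inter_mem huv (Ultrafilter.compl_mem_iff_notMem.2 h)) ?_
  rintro x ⟨hxD, hxA⟩
  rw [Dset, Set.mem_ofPred_eq, ← pmul_union_pmul_compl x A] at hxD
  exact (Ultrafilter.union_mem_iff.1 hxD).resolve_left hxA

theorem stmt18 (f : ℕ+ → ℕ+) (hf : ∀ a b : ℕ+, f (a * b) = f a * f b) :
    ∀ u v : Ultrafilter ℕ+, SDvd v u →
      (∀ A : Set ℕ+, quotMem u v (f ⁻¹' A) →
        quotMem (Ultrafilter.map f u) (Ultrafilter.map f v) A) ∧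
      {A : Set ℕ+ | quotMem u v (f ⁻¹' A)} =
        {A : Set ℕ+ | quotMem (Ultrafilter.map f u) (Ultrafilter.map f v) A} := by
  intro u v huv
  refine ⟨fun A => quotMem_map_of_quotMem hf, Set.ext fun A => ⟨quotMem_map_of_quotMem hf, ?_⟩⟩
  intro (hA : quotMem (u.map f) (v.map f) A)
  by_contra hnot
  have hAc : quotMem u v (f ⁻¹' Aᶜ) := quotMem_compl_of_not_quotMem huv hnot
  exact not_quotMem_compl hA (quotMem_map_of_quotMem hf hAc)
end
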